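/- arXiv:1309.7512 — 4 statements merged into one kernel-verified Lean document; each statement's English description precedes it below -/
import Mathlib

section
/- Let f : Finset V → ℝ be a nonnegative submodular function on the subsets of a finite set V, let a, b ∈ V be distinct and c, d ∈ V be distinct, and let 0 < δ ≤ cap(f, c, d). Let f' be the result of pushing δ units of flow on the arc (c, d), i.e. f'(S) = f(S) − δ when c ∈ S and d ∉ S, f'(S) = f(S) + δ when c ∉ S and d ∈ S, and f'(S) = f(S) otherwise. If the arc (a, b) was previously saturated but now has positive residual capacity, i.e. cap(f, a, b) = 0 and cap(f', a, b) > 0, then: (1) either a = d or cap(f, a, d) > 0, and (2) either b = c or cap(f, c, b) > 0. -/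
/-- A function `f` on the subsets of a finite set `V` is submodular if
`f (S ∩ T) + f (S ∪ T) ≤ f S + f T` for all `S, T ⊆ V`. -/
def Submodular {V : Type*} [DecidableEq V] (f : Finset V → ℝ) : Prop :=
  ∀ S T : Finset V, f (S ∩ T) + f (S ∪ T) ≤ f S + f T

/-- The result of pushing `δ` units of flow on the arc `(c, d)`:
`f S - δ` when `c ∈ S, d ∉ S`; `f S + δ` when `c ∉ S, d ∈ S`; `f S` otherwise. -/
def pushFlow {V : Type*} [DecidableEq V] (f : Finset V → ℝ) (c d : V) (δ : ℝ)
    (S : Finset V) : ℝ :=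
  if c ∈ S ∧ d ∉ S then f S - δ
  else if c ∉ S ∧ d ∈ S then f S + δ
  else f S

/-- The residual capacity of the arc `(i, j)` with respect to `f`:
the minimum of `f S` over all subsets `S ⊆ V` with `i ∈ S` and `j ∉ S`. -/
noncomputable def cap {V : Type*} [Fintype V] [DecidableEq V]
    (f : Finset V → ℝ) (i j : V) : ℝ :=
  sInf {r : ℝ | ∃ S : Finset V, i ∈ S ∧ j ∉ S ∧ f S = r}

lemma cap_set_finite {V : Type*} [Fintype V] [DecidableEq V] (f : Finset V → ℝ) (i j : V) :
    {r : ℝ | ∃ S : Finset V, i ∈ S ∧ j ∉ S ∧ f S = r}.Finite := by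
  apply (Set.finite_range f).subset
  rintro r ⟨S, _, _, h⟩; exact ⟨S, h⟩

lemma cap_le {V : Type*} [Fintype V] [DecidableEq V] (f : Finset V → ℝ) {i j : V}
    {S : Finset V} (h1 : i ∈ S) (h2 : j ∉ S) : cap f i j ≤ f S :=
  csInf_le (cap_set_finite f i j).bddBelow ⟨S, h1, h2, rfl⟩

lemma cap_attained {V : Type*} [Fintype V] [DecidableEq V] (f : Finset V → ℝ) (i j : V)
    (hij : i ≠ j) : ∃ S : Finset V, i ∈ S ∧ j ∉ S ∧ f S = cap f i j := by
  have hne : {r : ℝ | ∃ S : Finset V, i ∈ S ∧ j ∉ S ∧ f S = r}.Nonempty :=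
    ⟨f {i}, {i}, Finset.mem_singleton_self i, by simp [Ne.symm hij], rfl⟩
  exact hne.csInf_mem (cap_set_finite f i j)

lemma cap_nonneg {V : Type*} [Fintype V] [DecidableEq V] (f : Finset V → ℝ)
    (hf0 : ∀ S : Finset V, 0 ≤ f S) (i j : V)
    (hne : {r : ℝ | ∃ S : Finset V, i ∈ S ∧ j ∉ S ∧ f S = r}.Nonempty) :
    0 ≤ cap f i j :=
  le_csInf hne (by rintro r ⟨S, _, _, rfl⟩; exact hf0 S)

/-- If the arc `(a, b)` was previously saturated but gains residual capacity after
pushing flow along `(c, d)`, then (1) either `a = d` or `(a, d)` was residual, and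
(2) either `b = c` or `(c, b)` was residual. -/
theorem newly_unsaturated_arc {V : Type*} [Fintype V] [DecidableEq V]
    (f : Finset V → ℝ) (hf : Submodular f) (hf0 : ∀ S : Finset V, 0 ≤ f S)
    (a b c d : V) (hab : a ≠ b) (hcd : c ≠ d)
    (δ : ℝ) (hδ0 : 0 < δ) (hδcap : δ ≤ cap f c d)
    (hsat : cap f a b = 0) (hres : 0 < cap (pushFlow f c d δ) a b) :
    (a = d ∨ 0 < cap f a d) ∧ (b = c ∨ 0 < cap f c b) := by
  -- cap of pushFlow is at most its value on any admissible set
  have hcapf' : ∀ S : Finset V, a ∈ S → b ∉ S → 0 < pushFlow f c d δ S := fun S h1 h2 =>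
    lt_of_lt_of_le hres (cap_le (pushFlow f c d δ) h1 h2)
  obtain ⟨S₀, haS, hbS, hfS⟩ := cap_attained f a b hab
  rw [hsat] at hfS
  have h0 := hcapf' S₀ haS hbS
  have hcdS : c ∉ S₀ ∧ d ∈ S₀ := by
    by_contra h
    unfold pushFlow at h0
    by_cases h1 : c ∈ S₀ ∧ d ∉ S₀
    · rw [if_pos h1] at h0; linarith
    · rw [if_neg h1, if_neg h] at h0; linarith
  obtain ⟨hcS, hdS⟩ := hcdS
  constructor
  · by_cases had : a = d
    · exact Or.inl had
    right
    rcases (cap_nonneg f hf0 a d ⟨f {a}, {a}, Finset.mem_singleton_self a,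
        by simp [Ne.symm had], rfl⟩).lt_or_eq with h | h
    · exact h
    exfalso
    obtain ⟨T, haT, hdT, hfT⟩ := cap_attained f a d had
    rw [← h] at hfT
    have hsub := hf S₀ T
    have hU := hf0 (S₀ ∪ T)
    have hI : f (S₀ ∩ T) ≤ 0 := by linarith
    have h2 := hcapf' (S₀ ∩ T) (Finset.mem_inter.mpr ⟨haS, haT⟩)
      (fun hb => hbS (Finset.mem_inter.mp hb).1)
    have hcI : c ∉ S₀ ∩ T := fun hc => hcS (Finset.mem_inter.mp hc).1
    have hdI : d ∉ S₀ ∩ T := fun hd => hdT (Finset.mem_inter.mp hd).2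
    unfold pushFlow at h2
    rw [if_neg (fun hx => hcI hx.1), if_neg (fun hx => hdI hx.2)] at h2
    linarith
  · by_cases hbc : b = c
    · exact Or.inl hbc
    right
    rcases (cap_nonneg f hf0 c b ⟨f {c}, {c}, Finset.mem_singleton_self c,
        by simp [hbc], rfl⟩).lt_or_eq with h | h
    · exact h
    exfalso
    obtain ⟨T, hcT, hbT, hfT⟩ := cap_attained f c b (Ne.symm hbc)
    rw [← h] at hfT
    have hsub := hf S₀ T
    have hI := hf0 (S₀ ∩ T)
    have hU : f (S₀ ∪ T) ≤ 0 := by linarith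
    have h2 := hcapf' (S₀ ∪ T) (Finset.mem_union_left _ haS)
      (fun hb => (Finset.mem_union.mp hb).elim hbS hbT)
    have hcU : c ∈ S₀ ∪ T := Finset.mem_union_right _ hcT
    have hdU : d ∈ S₀ ∪ T := Finset.mem_union_left _ hdS
    unfold pushFlow at h2
    rw [if_neg (fun hx => hx.2 hdU), if_neg (fun hx => hx.1 hcU)] at h2
    linarith
end

section
/- Every expansion move of a multi-label energy whose clique terms are sums of per-label submodular functions is a sum-of-submodular (and hence submodular) binary energy: let V be a finite set, L a finite label set, 𝒞 a finite collection of subsets of V, and for each C ∈ 𝒞 and ℓ ∈ L let g_{C,ℓ} : Finset V → ℝ be submodular. Fix a current labeling y : V → L and a label α ∈ L, and for each C ∈ 𝒞 and ℓ ∈ L set C_ℓ = { i ∈ C : y(i) = ℓ }. Then the binary expansion-move energy B : Finset V → ℝ defined by B(S) = Σ_{C ∈ 𝒞} ( g_{C,α}(C_α ∪ (S ∩ C)) + Σ_{ℓ ∈ L, ℓ ≠ α} g_{C,ℓ}(C_ℓ \ S) ) is submodular on the subsets of V; moreover each summand depends on S only through S ∩ C and is a submodular function of S, so B is sum-of-submodular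 with respect to the clique structure 𝒞. -/
lemma submod_sum {V ι : Type*} [DecidableEq V] (s : Finset ι) (f : ι → Finset V → ℝ)
    (hf : ∀ i ∈ s, Submodular (f i)) : Submodular (fun S => ∑ i ∈ s, f i S) := by
  intro S T
  simp only
  rw [← Finset.sum_add_distrib, ← Finset.sum_add_distrib]
  exact Finset.sum_le_sum fun i hi => hf i hi S T

lemma submod_union {V : Type*} [DecidableEq V] {f : Finset V → ℝ} (hf : Submodular f)
    (A : Finset V) : Submodular (fun S => f (A ∪ S)) := by
  intro S T
  have h1 : A ∪ S ∩ T = (A ∪ S) ∩ (A ∪ T) := by ext x; simp; try tauto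
  have h2 : A ∪ (S ∪ T) = (A ∪ S) ∪ (A ∪ T) := by ext x; simp; try tauto
  simpa [h1, h2] using hf (A ∪ S) (A ∪ T)

lemma submod_diff {V : Type*} [DecidableEq V] {f : Finset V → ℝ} (hf : Submodular f)
    (A : Finset V) : Submodular (fun S => f (A \ S)) := by
  intro S T
  have h1 : A \ (S ∩ T) = (A \ S) ∪ (A \ T) := by ext x; simp; try tauto
  have h2 : A \ (S ∪ T) = (A \ S) ∩ (A \ T) := by ext x; simp; try tauto
  have := hf (A \ S) (A \ T)
  simp only [h1, h2]
  linarith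

lemma submod_inter {V : Type*} [DecidableEq V] {f : Finset V → ℝ} (hf : Submodular f)
    (C : Finset V) : Submodular (fun S => f (S ∩ C)) := by
  intro S T
  have h1 : (S ∩ T) ∩ C = (S ∩ C) ∩ (T ∩ C) := by ext x; simp; try tauto
  have h2 : (S ∪ T) ∩ C = (S ∩ C) ∪ (T ∩ C) := by ext x; simp; try tauto
  simpa [h1, h2] using hf (S ∩ C) (T ∩ C)

/-- Every expansion move of a multi-label energy whose clique terms are sums of
per-label submodular functions is sum-of-submodular (and hence submodular):
the expansion-move energy
`B S = Σ_{C ∈ 𝒞} ( g_{C,α}(C_α ∪ (S ∩ C)) + Σ_{ℓ ≠ α} g_{C,ℓ}(C_ℓ \ S) )`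
(where `C_ℓ = {i ∈ C : y i = ℓ}`) is submodular, and moreover it can be written
as `Σ_{C ∈ 𝒞} h_C (S ∩ C)` with each `h_C` submodular. -/
theorem expansion_move_sos {V : Type*} [Fintype V] [DecidableEq V]
    {L : Type*} [Fintype L] [DecidableEq L]
    (𝒞 : Finset (Finset V)) (g : Finset V → L → Finset V → ℝ)
    (hg : ∀ C ∈ 𝒞, ∀ ℓ : L, Submodular (g C ℓ))
    (y : V → L) (α : L) :
    Submodular (fun S : Finset V => ∑ C ∈ 𝒞,
        (g C α ((C.filter fun i => y i = α) ∪ (S ∩ C)) +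
          ∑ ℓ ∈ Finset.univ.erase α, g C ℓ ((C.filter fun i => y i = ℓ) \ S))) ∧
    ∃ h : Finset V → Finset V → ℝ, (∀ C ∈ 𝒞, Submodular (h C)) ∧
      ∀ S : Finset V,
        (∑ C ∈ 𝒞, (g C α ((C.filter fun i => y i = α) ∪ (S ∩ C)) +
            ∑ ℓ ∈ Finset.univ.erase α, g C ℓ ((C.filter fun i => y i = ℓ) \ S)))
          = ∑ C ∈ 𝒞, h C (S ∩ C) := by
  -- Each clique's summand, as a function of the part of `S` inside the clique.
  set h : Finset V → Finset V → ℝ := fun C T =>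
    g C α ((C.filter fun i => y i = α) ∪ (T ∩ C)) +
      ∑ ℓ ∈ Finset.univ.erase α, g C ℓ ((C.filter fun i => y i = ℓ) \ T) with hh
  have hsub : ∀ C ∈ 𝒞, Submodular (h C) := by
    intro C hC S T
    have h1 := submod_inter (submod_union (hg C hC α) (C.filter fun i => y i = α)) C S T
    have h2 := submod_sum (Finset.univ.erase α)
      (fun ℓ T => g C ℓ ((C.filter fun i => y i = ℓ) \ T))
      (fun ℓ _ => submod_diff (hg C hC ℓ) _) S T
    simp only [hh] at *
    linarith
  have heq : ∀ S : Finset V,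
      (∑ C ∈ 𝒞, (g C α ((C.filter fun i => y i = α) ∪ (S ∩ C)) +
          ∑ ℓ ∈ Finset.univ.erase α, g C ℓ ((C.filter fun i => y i = ℓ) \ S)))
        = ∑ C ∈ 𝒞, h C (S ∩ C) := by
    intro S
    refine Finset.sum_congr rfl fun C hC => ?_
    have e1 : (S ∩ C) ∩ C = S ∩ C := by rw [Finset.inter_assoc, Finset.inter_self]
    have e2 : ∀ ℓ : L, (C.filter fun i => y i = ℓ) \ (S ∩ C)
        = (C.filter fun i => y i = ℓ) \ S := by
      intro ℓ; ext x; simp only [Finset.mem_sdiff, Finset.mem_filter, Finset.mem_inter]; tauto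
    simp [hh, e1, e2]
  refine ⟨?_, h, hsub, heq⟩
  intro S T
  have := submod_sum 𝒞 (fun C S => h C (S ∩ C)) (fun C hC => submod_inter (hsub C hC) C) S T
  simp only [heq]
  simpa using this
end

section
/- The P^n Potts model equals a sum of per-label clique functions up to an additive constant: let C be a nonempty finite set, L a finite label set, λ : L → ℝ label costs, and λ_max ∈ ℝ with λ_ℓ ≤ λ_max for all ℓ ∈ L. For each ℓ ∈ L define g_ℓ : Finset C → ℝ by g_ℓ(S) = λ_ℓ − λ_max if S = C and g_ℓ(S) = 0 otherwise. Then for every labeling y : C → L, writing C_ℓ = { i ∈ C : y(i) = ℓ }, one has Σ_{ℓ ∈ L} g_ℓ(C_ℓ) = P(y) − λ_max, where P(y) = λ_ℓ if y(i) = ℓ for all i ∈ C (i.e. y is constant with value ℓ) and P(y) = λ_max otherwise. -/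
open scoped Classical

/-- The `Pⁿ` Potts model equals a sum of per-label clique functions up to the
additive constant `λ_max`: with `g_ℓ(S) = (λ_ℓ − λ_max)·[S = C]` and
`C_ℓ = {i ∈ C : y i = ℓ}`, one has `Σ_ℓ g_ℓ(C_ℓ) = P(y) − λ_max`, where
`P(y) = λ_ℓ` if `y` is constant with value `ℓ` and `P(y) = λ_max` otherwise. -/
theorem potts_eq_sum_of_clique_functions {C : Type*} [Fintype C] [DecidableEq C]
    [Nonempty C] {L : Type*} [Fintype L] [DecidableEq L]
    (lam : L → ℝ) (lamMax : ℝ) (hlam : ∀ ℓ : L, lam ℓ ≤ lamMax)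
    (y : C → L) :
    (∑ ℓ : L, (if (Finset.univ.filter fun i => y i = ℓ) = Finset.univ
        then lam ℓ - lamMax else 0))
      = (if h : ∃ ℓ : L, ∀ i : C, y i = ℓ then lam h.choose else lamMax)
        - lamMax := by
  have key : ∀ ℓ : L, (Finset.univ.filter fun i => y i = ℓ) = Finset.univ ↔ ∀ i : C, y i = ℓ := by
    intro ℓ
    simp [Finset.eq_univ_iff_forall]
  by_cases h : ∃ ℓ : L, ∀ i : C, y i = ℓ
  · rw [dif_pos h]
    have hc := h.choose_spec
    rw [Finset.sum_eq_single h.choose]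
    · rw [if_pos ((key _).mpr hc)]
    · intro ℓ _ hne
      rw [if_neg]
      intro hu
      exact hne ((((key ℓ).mp hu) (Classical.arbitrary C)) ▸ (hc (Classical.arbitrary C)) ▸ rfl)
    · intro hmem; exact absurd (Finset.mem_univ _) hmem
  · rw [dif_neg h]
    rw [Finset.sum_eq_zero]
    · ring
    intro ℓ _
    rw [if_neg]
    intro hu
    exact h ⟨ℓ, (key ℓ).mp hu⟩
end

section
/- Every expansion move of the P^n Potts model is submodular: let V be a finite set, L a finite label set, 𝒞 a finite collection of nonempty subsets of V, and for each C ∈ 𝒞 let λ_C : L → ℝ and λ_{C,max} ∈ ℝ satisfy λ_C(ℓ) ≤ λ_{C,max} for all ℓ ∈ L. Fix a current labeling y : V → L and a label α ∈ L, and for C ∈ 𝒞, ℓ ∈ L set C_ℓ = { i ∈ C : y(i) = ℓ }. Define, for each C and ℓ, g_{C,ℓ}(S) = λ_C(ℓ) − λ_{C,max} if S = C and g_{C,ℓ}(S) = 0 otherwise. Then the expansion-move energy B : Finset V → ℝ defined by B(S) = Σ_{C ∈ 𝒞} ( g_{C,α}(C_α ∪ (S ∩ C)) + Σ_{ℓ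 ≠ α} g_{C,ℓ}(C_ℓ \ S) ) is submodular on the subsets of V. -/
private lemma potts_key {c : ℝ} (hc : c ≤ 0) (p q r s : Prop)
    [Decidable p] [Decidable q] [Decidable r] [Decidable s]
    (hboth : r → s → p ∧ q) (hone : r ∨ s → p ∨ q) :
    (if p then c else 0) + (if q then c else 0) ≤
      (if r then c else 0) + (if s then c else 0) := by
  split_ifs <;> first | linarith | (exfalso; tauto)

/-- Every expansion move of the `Pⁿ` Potts model is submodular: with per-label
clique functions `g_{C,ℓ}(S) = (λ_C(ℓ) − λ_{C,max})·[S = C]` and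
`C_ℓ = {i ∈ C : y i = ℓ}`, the expansion-move energy
`B S = Σ_{C ∈ 𝒞} ( g_{C,α}(C_α ∪ (S ∩ C)) + Σ_{ℓ ≠ α} g_{C,ℓ}(C_ℓ \ S) )`
is submodular. -/
theorem potts_expansion_move_submodular {V : Type*} [Fintype V] [DecidableEq V]
    {L : Type*} [Fintype L] [DecidableEq L]
    (𝒞 : Finset (Finset V)) (h𝒞 : ∀ C ∈ 𝒞, C.Nonempty)
    (lam : Finset V → L → ℝ) (lamMax : Finset V → ℝ)
    (hlam : ∀ C ∈ 𝒞, ∀ ℓ : L, lam C ℓ ≤ lamMax C)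
    (y : V → L) (α : L) :
    Submodular (fun S : Finset V => ∑ C ∈ 𝒞,
      ((if ((C.filter fun i => y i = α) ∪ (S ∩ C)) = C
          then lam C α - lamMax C else 0) +
        ∑ ℓ ∈ Finset.univ.erase α,
          (if ((C.filter fun i => y i = ℓ) \ S) = C
            then lam C ℓ - lamMax C else 0))) := by
  intro S T
  simp only
  rw [← Finset.sum_add_distrib, ← Finset.sum_add_distrib]
  refine Finset.sum_le_sum fun C hC => ?_
  have hcα : lam C α - lamMax C ≤ 0 := by linarith [hlam C hC α]
  -- the α-part
  have H1 : (if ((C.filter fun i => y i = α) ∪ ((S ∩ T) ∩ C)) = C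
        then lam C α - lamMax C else 0) +
      (if ((C.filter fun i => y i = α) ∪ ((S ∪ T) ∩ C)) = C
        then lam C α - lamMax C else 0) ≤
      (if ((C.filter fun i => y i = α) ∪ (S ∩ C)) = C
        then lam C α - lamMax C else 0) +
      (if ((C.filter fun i => y i = α) ∪ (T ∩ C)) = C
        then lam C α - lamMax C else 0) := by
    refine potts_key hcα _ _ _ _ ?_ ?_
    · intro hS hT
      constructor
      · have : (S ∩ T) ∩ C = (S ∩ C) ∩ (T ∩ C) := by
          ext x; simp only [Finset.mem_inter]; tauto
        rw [this, Finset.union_inter_distrib_left, hS, hT, Finset.inter_self]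
      · apply Finset.Subset.antisymm
        · exact Finset.union_subset (Finset.filter_subset _ _) Finset.inter_subset_right
        · conv_lhs => rw [← hS]
          exact Finset.union_subset_union_right
            (Finset.inter_subset_inter_right Finset.subset_union_left)
    · rintro (h | h)
      all_goals right
      · apply Finset.Subset.antisymm
        · exact Finset.union_subset (Finset.filter_subset _ _) Finset.inter_subset_right
        · conv_lhs => rw [← h]
          exact Finset.union_subset_union_right
            (Finset.inter_subset_inter_right Finset.subset_union_left)
      · apply Finset.Subset.antisymm
        · exact Finset.union_subset (Finset.filter_subset _ _) Finset.inter_subset_right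
        · conv_lhs => rw [← h]
          exact Finset.union_subset_union_right
            (Finset.inter_subset_inter_right Finset.subset_union_right)
  -- the other-labels part
  have H2 : ∀ ℓ ∈ Finset.univ.erase α,
      (if ((C.filter fun i => y i = ℓ) \ (S ∩ T)) = C
        then lam C ℓ - lamMax C else 0) +
      (if ((C.filter fun i => y i = ℓ) \ (S ∪ T)) = C
        then lam C ℓ - lamMax C else 0) ≤
      (if ((C.filter fun i => y i = ℓ) \ S) = C
        then lam C ℓ - lamMax C else 0) +
      (if ((C.filter fun i => y i = ℓ) \ T) = C
        then lam C ℓ - lamMax C else 0) := by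
    intro ℓ _
    have hcℓ : lam C ℓ - lamMax C ≤ 0 := by linarith [hlam C hC ℓ]
    refine potts_key hcℓ _ _ _ _ ?_ ?_
    · intro hS hT
      constructor
      · apply Finset.Subset.antisymm
        · exact (Finset.sdiff_subset).trans (Finset.filter_subset _ _)
        · conv_lhs => rw [← hS]
          exact Finset.sdiff_subset_sdiff (Finset.Subset.refl _) Finset.inter_subset_left
      · have : (C.filter fun i => y i = ℓ) \ (S ∪ T)
            = ((C.filter fun i => y i = ℓ) \ S) ∩ ((C.filter fun i => y i = ℓ) \ T) := by
          ext x; simp only [Finset.mem_sdiff, Finset.mem_union, Finset.mem_inter]; tauto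
        rw [this, hS, hT, Finset.inter_self]
    · rintro (h | h)
      all_goals left
      · apply Finset.Subset.antisymm
        · exact (Finset.sdiff_subset).trans (Finset.filter_subset _ _)
        · conv_lhs => rw [← h]
          exact Finset.sdiff_subset_sdiff (Finset.Subset.refl _) Finset.inter_subset_left
      · apply Finset.Subset.antisymm
        · exact (Finset.sdiff_subset).trans (Finset.filter_subset _ _)
        · conv_lhs => rw [← h]
          exact Finset.sdiff_subset_sdiff (Finset.Subset.refl _) Finset.inter_subset_right
  have H2' := Finset.sum_le_sum H2
  rw [Finset.sum_add_distrib, Finset.sum_add_distrib] at H2'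
  linarith
end
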